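/- arXiv:1909.07314 — 2 statements merged into one kernel-verified Lean document; each statement's English description precedes it below -/
import Mathlib

section
/- Let 0 ≤ s < 1/2 and u ∈ H^{-s}(𝕋,ℝ) with zero mean. Define the sesquilinear form Q_u⁺(f,g) = ⟨-i∂ₓ f | g⟩ − ⟨u | g f̄⟩ + (1 + η_s(‖u‖_{-s}))⟨f | g⟩ on H^{1/2}_+. Then for all f ∈ H^{1/2}_+, (1/2)‖f‖_{1/2}² ≤ Q_u⁺(f,f) ≤ (3 + 2η_s(‖u‖_{-s}))‖f‖_{1/2}², so Q_u⁺ is a positive form equivalent to the H^{1/2} inner product. -/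
/-!
The kinetic term `∑ n |f̂(n)|²` is squeezed between `‖f‖²_{1/2} - ‖f‖²` and `‖f‖²_{1/2}`: the upper
bound holds because `n ≤ ⟨n⟩`, the lower one because `⟨n⟩ ≤ n + 1` on the nonnegative modes that
carry `f ∈ H^{1/2}_+`. The assumed estimate absorbs the pairing `⟨u | f f̄⟩` into half of
`‖f‖²_{1/2}` plus `η_s ‖f‖²`, which the shift `(1 + η_s) ‖f‖²` compensates.
-/

noncomputable section

open scoped BigOperators

/-- The weight `⟨n⟩ = max 1 |n|`. -/
def wt (n : ℤ) : ℝ := max 1 |n|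

/-- A Fourier coefficient sequence belongs to the Sobolev space `H^t(𝕋, ℂ)`. -/
def MemSob (t : ℝ) (a : ℤ → ℂ) : Prop :=
  Summable fun n : ℤ => wt n ^ (2 * t) * ‖a n‖ ^ 2

/-- The Sobolev `H^t` norm of a Fourier coefficient sequence. -/
def sobNorm (t : ℝ) (a : ℤ → ℂ) : ℝ :=
  Real.sqrt (∑' n : ℤ, wt n ^ (2 * t) * ‖a n‖ ^ 2)

/-- `f` lies in the Hardy space: vanishing negative Fourier modes. -/
def PlusSupp (b : ℤ → ℂ) : Prop := ∀ n : ℤ, n < 0 → b n = 0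

/-- `u` is real valued: `conj (û(n)) = û(-n)`. -/
def RealCoeff (a : ℤ → ℂ) : Prop := ∀ n : ℤ, (starRingEnd ℂ) (a n) = a (-n)

/-- `η_s(r) = r (2(1+r))^{(1+2s)/(1-2s)} C²`. -/
def etaS (s C r : ℝ) : ℝ := r * (2 * (1 + r)) ^ ((1 + 2 * s) / (1 - 2 * s)) * C ^ 2

/-- The pairing `⟨u | f f̄⟩` computed in Fourier coefficients. -/
def pairFF (a b : ℤ → ℂ) : ℂ :=
  ∑' n : ℤ, a n * (starRingEnd ℂ) (∑' m : ℤ, b m * (starRingEnd ℂ) (b (m - n)))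

/-- The quadratic form `Q_u⁺(f,f) = ⟨-i∂ₓ f | f⟩ − ⟨u | f f̄⟩ + (1+η_s(‖u‖_{-s}))‖f‖²`
in Fourier coefficients: `⟨-i∂ₓ f | f⟩ = ∑_n n |f̂(n)|²`. -/
def Qform (s C : ℝ) (a b : ℤ → ℂ) : ℝ :=
  (∑' n : ℤ, (n : ℝ) * ‖b n‖ ^ 2) - (pairFF a b).re +
    (1 + etaS s C (sobNorm (-s) a)) * sobNorm 0 b ^ 2

lemma one_le_wt (n : ℤ) : 1 ≤ wt n := le_max_left _ _

lemma abs_le_wt (n : ℤ) : |(n : ℝ)| ≤ wt n := le_max_right _ _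

lemma wt_le_add_one {n : ℤ} (hn : 0 ≤ n) : wt n ≤ n + 1 := by
  have hn' : (0 : ℝ) ≤ n := by exact_mod_cast hn
  rw [wt, abs_of_nonneg hn']
  exact max_le (by linarith) (by linarith)

lemma rpow_wt_nonneg (n : ℤ) (t : ℝ) : 0 ≤ wt n ^ t :=
  Real.rpow_nonneg (zero_le_one.trans (one_le_wt n)) t

lemma rpow_wt_le_rpow_wt {t t' : ℝ} (h : t ≤ t') (n : ℤ) : wt n ^ (2 * t) ≤ wt n ^ (2 * t') :=
  Real.rpow_le_rpow_of_exponent_le (one_le_wt n) (by linarith)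

section Sobolev

variable {t t' : ℝ} {b : ℤ → ℂ}

lemma sobNorm_sq (t : ℝ) (b : ℤ → ℂ) :
    sobNorm t b ^ 2 = ∑' n : ℤ, wt n ^ (2 * t) * ‖b n‖ ^ 2 :=
  Real.sq_sqrt (tsum_nonneg fun n => mul_nonneg (rpow_wt_nonneg n _) (sq_nonneg _))

lemma MemSob.of_le (h : t ≤ t') (hb : MemSob t' b) : MemSob t b :=
  hb.of_nonneg_of_le (fun n => mul_nonneg (rpow_wt_nonneg n _) (sq_nonneg _))
    fun n => mul_le_mul_of_nonneg_right (rpow_wt_le_rpow_wt h n) (sq_nonneg _)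

lemma sobNorm_sq_le_of_le (h : t ≤ t') (hb : MemSob t' b) : sobNorm t b ^ 2 ≤ sobNorm t' b ^ 2 := by
  rw [sobNorm_sq, sobNorm_sq]
  exact Summable.tsum_le_tsum
    (fun n => mul_le_mul_of_nonneg_right (rpow_wt_le_rpow_wt h n) (sq_nonneg _)) (hb.of_le h) hb

lemma memSob_zero_iff : MemSob 0 b ↔ Summable fun n : ℤ => ‖b n‖ ^ 2 := by
  simp [MemSob]

lemma memSob_half_iff : MemSob (1 / 2) b ↔ Summable fun n : ℤ => wt n * ‖b n‖ ^ 2 := by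
  simp [MemSob]

lemma sobNorm_zero_sq (b : ℤ → ℂ) : sobNorm 0 b ^ 2 = ∑' n : ℤ, ‖b n‖ ^ 2 := by
  simp [sobNorm_sq]

lemma sobNorm_half_sq (b : ℤ → ℂ) : sobNorm (1 / 2) b ^ 2 = ∑' n : ℤ, wt n * ‖b n‖ ^ 2 := by
  simp [sobNorm_sq]

lemma MemSob.summable_mul_norm_sq (hb : MemSob (1 / 2) b) :
    Summable fun n : ℤ => (n : ℝ) * ‖b n‖ ^ 2 := by
  refine (memSob_half_iff.mp hb).of_norm_bounded fun n => ?_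
  rw [norm_mul, Real.norm_eq_abs, norm_pow, norm_norm]
  exact mul_le_mul_of_nonneg_right (abs_le_wt n) (sq_nonneg _)

lemma tsum_mul_norm_sq_le_sobNorm_half_sq (hb : MemSob (1 / 2) b) :
    ∑' n : ℤ, (n : ℝ) * ‖b n‖ ^ 2 ≤ sobNorm (1 / 2) b ^ 2 := by
  rw [sobNorm_half_sq]
  exact Summable.tsum_le_tsum
    (fun n => mul_le_mul_of_nonneg_right ((le_abs_self _).trans (abs_le_wt n)) (sq_nonneg _))
    hb.summable_mul_norm_sq (memSob_half_iff.mp hb)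

lemma sobNorm_half_sq_sub_le_tsum_mul_norm_sq (hplus : PlusSupp b) (hb : MemSob (1 / 2) b) :
    sobNorm (1 / 2) b ^ 2 - sobNorm 0 b ^ 2 ≤ ∑' n : ℤ, (n : ℝ) * ‖b n‖ ^ 2 := by
  have hb0 := memSob_zero_iff.mp (hb.of_le (by norm_num))
  have hb1 := memSob_half_iff.mp hb
  rw [sobNorm_half_sq, sobNorm_zero_sq, ← hb1.tsum_sub hb0]
  refine Summable.tsum_le_tsum (fun n => ?_) (hb1.sub hb0) hb.summable_mul_norm_sq
  rcases lt_or_ge n 0 with hn | hn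
  · simp [hplus n hn]
  · have hwt := mul_le_mul_of_nonneg_right (wt_le_add_one hn) (sq_nonneg ‖b n‖)
    linarith

end Sobolev

lemma etaS_nonneg (s C : ℝ) {r : ℝ} (hr : 0 ≤ r) : 0 ≤ etaS s C r := by
  unfold etaS
  positivity

theorem stmt4_general (s : ℝ) (C : ℝ) (a : ℤ → ℂ)
    (hest : ∀ b : ℤ → ℂ, PlusSupp b → MemSob (1 / 2) b →
      ‖pairFF a b‖ ≤ 1 / 2 * sobNorm (1 / 2) b ^ 2 +
        etaS s C (sobNorm (-s) a) * sobNorm 0 b ^ 2) :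
    ∀ b : ℤ → ℂ, PlusSupp b → MemSob (1 / 2) b →
      1 / 2 * sobNorm (1 / 2) b ^ 2 ≤ Qform s C a b ∧
      Qform s C a b ≤ (3 + 2 * etaS s C (sobNorm (-s) a)) * sobNorm (1 / 2) b ^ 2 := by
  intro b hplus hb
  have hη : 0 ≤ etaS s C (sobNorm (-s) a) := etaS_nonneg s C (Real.sqrt_nonneg _)
  obtain ⟨hpair_ge, hpair_le⟩ := abs_le.mp ((Complex.abs_re_le_norm _).trans (hest b hplus hb))
  have hkin_le := tsum_mul_norm_sq_le_sobNorm_half_sq hb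
  have hkin_ge := sobNorm_half_sq_sub_le_tsum_mul_norm_sq hplus hb
  have hL2 := sobNorm_sq_le_of_le (by norm_num : (0 : ℝ) ≤ 1 / 2) hb
  have hηL2 := mul_le_mul_of_nonneg_left hL2 hη
  unfold Qform
  constructor <;> linarith

/-- For `u ∈ H^{-s}(𝕋,ℝ)` of zero mean, `0 ≤ s < 1/2`, granted the Toeplitz
estimate `|⟨u|f f̄⟩| ≤ (1/2)‖f‖²_{1/2} + η_s(‖u‖_{-s})‖f‖²`, the form `Q_u⁺`
satisfies `(1/2)‖f‖²_{1/2} ≤ Q_u⁺(f,f) ≤ (3+2η_s(‖u‖_{-s}))‖f‖²_{1/2}`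
for all `f ∈ H^{1/2}_+`. -/
theorem stmt4 (s : ℝ) (hs0 : 0 ≤ s) (hs : s < 1 / 2) (C : ℝ) (hC : 0 < C)
    (a : ℤ → ℂ) (ha : RealCoeff a) (ha0 : a 0 = 0) (haS : MemSob (-s) a)
    (hest : ∀ b : ℤ → ℂ, PlusSupp b → MemSob (1 / 2) b →
      ‖pairFF a b‖ ≤ 1 / 2 * sobNorm (1 / 2) b ^ 2 +
        etaS s C (sobNorm (-s) a) * sobNorm 0 b ^ 2) :
    ∀ b : ℤ → ℂ, PlusSupp b → MemSob (1 / 2) b →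
      1 / 2 * sobNorm (1 / 2) b ^ 2 ≤ Qform s C a b ∧
      Qform s C a b ≤ (3 + 2 * etaS s C (sobNorm (-s) a)) * sobNorm (1 / 2) b ^ 2 :=
  stmt4_general s C a hest
end
end

section
/- With λ_n and γ_n as above (λ_n = n − ∑_{k>n}γ_k, γ_n ≥ 0, ∑γ_n = −λ₀), the quantities κ_n = (λ_n − λ_0)^{-1} ∏_{p≠n}(1 − γ_p/(λ_p − λ_n)) satisfy 0 < κ_n ≤ e^{−λ₀}/n for every n ≥ 1. -/
/-! Every factor `1 - γ_p / (λ_p - λ_n)` lies in `[e^{-γ_p}, e^{γ_p}]`: for `p < n` the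
denominator is `≤ -1`, and for `p > n` it is at least `1 + γ_p`. Hence the product converges
to a positive number at most `exp (∑ γ_p) = e^{-λ₀}`, while `λ_n - λ₀ ≥ n` because consecutive
terms of `λ` differ by at least `1`. -/

open Real Set

lemma natCast_sub_le_sub_of_gap_nonneg {lam : ℕ → ℝ} (hgap : ∀ p, 0 ≤ lam (p + 1) - lam p - 1)
    {a b : ℕ} (hab : a ≤ b) : (b : ℝ) - a ≤ lam b - lam a := by
  induction b, hab using Nat.le_induction with
  | base => simp
  | succ m _ ih => push_cast; linarith [hgap m]

lemma one_sub_div_mem_Icc_exp {g d : ℝ} (hg : 0 ≤ g) (hd : d ≤ -1 ∨ 1 + g ≤ d) :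
    1 - g / d ∈ Icc (exp (-g)) (exp g) := by
  have hexp : 1 + g ≤ exp g := by linarith [add_one_le_exp g]
  have hexp_neg : exp (-g) ≤ 1 := exp_le_one_iff.2 (by linarith)
  rcases hd with hd | hd
  · have hd0 : d < 0 := by linarith
    have hlo : 0 ≤ -(g / d) := neg_nonneg.2 (div_nonpos_of_nonneg_of_nonpos hg hd0.le)
    have hhi : -(g / d) ≤ g := by
      rw [← div_neg]; exact div_le_self hg (by linarith)
    constructor <;> linarith
  · have hd0 : 0 < d := by linarith
    have hlo : exp (-g) ≤ 1 - g / d :=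
      calc exp (-g) ≤ (1 + g)⁻¹ := by rw [exp_neg]; exact inv_anti₀ (by linarith) hexp
        _ = 1 - g / (1 + g) := by field_simp; ring
        _ ≤ 1 - g / d := by gcongr
    exact ⟨hlo, by linarith [div_nonneg hg hd0.le]⟩

lemma abs_log_le_of_mem_Icc_exp {x g : ℝ} (hx : x ∈ Icc (exp (-g)) (exp g)) : |log x| ≤ g := by
  have hx0 : 0 < x := (exp_pos _).trans_le hx.1
  exact abs_le.2 ⟨(le_log_iff_exp_le hx0).2 hx.1, (log_le_iff_le_exp hx0).2 hx.2⟩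

lemma tprod_pos_and_le_exp_tsum {ι : Type*} {f g : ι → ℝ} (hg : Summable g)
    (hfg : ∀ i, f i ∈ Icc (exp (-g i)) (exp (g i))) :
    0 < ∏' i, f i ∧ ∏' i, f i ≤ exp (∑' i, g i) := by
  have hf0 i : 0 < f i := (exp_pos _).trans_le (hfg i).1
  have hlog i : log (f i) ≤ g i := (abs_le.1 (abs_log_le_of_mem_Icc_exp (hfg i))).2
  have hsummable : Summable fun i => log (f i) :=
    hg.of_norm_bounded fun i => abs_log_le_of_mem_Icc_exp (hfg i)
  rw [← rexp_tsum_eq_tprod hf0 hsummable]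
  exact ⟨exp_pos _, exp_le_exp.2 (hsummable.tsum_le_tsum hlog hg)⟩

lemma one_sub_gap_div_mem_Icc_exp {lam : ℕ → ℝ} (hgap : ∀ p, 0 ≤ lam (p + 1) - lam p - 1)
    {n p : ℕ} (hp : 1 ≤ p) (hpn : p ≠ n) :
    1 - (lam p - lam (p - 1) - 1) / (lam p - lam n) ∈
      Icc (exp (-(lam p - lam (p - 1) - 1))) (exp (lam p - lam (p - 1) - 1)) := by
  obtain ⟨q, rfl⟩ := Nat.exists_eq_add_of_le' hp
  rw [Nat.add_sub_cancel]
  refine one_sub_div_mem_Icc_exp (hgap q) ?_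
  rcases Nat.lt_or_gt_of_ne hpn with hlt | hgt
  · have h := natCast_sub_le_sub_of_gap_nonneg hgap hlt.le
    have hcast : ((q + 1 : ℕ) : ℝ) + 1 ≤ n := by exact_mod_cast hlt
    left; linarith
  · have h := natCast_sub_le_sub_of_gap_nonneg hgap (Nat.le_of_lt_succ hgt)
    have hcast : (n : ℝ) ≤ q := by exact_mod_cast Nat.le_of_lt_succ hgt
    right; linarith

lemma pred_injective_subtype (n : ℕ) :
    Function.Injective fun p : {p : ℕ // 1 ≤ p ∧ p ≠ n} => p.1 - 1 :=
  fun a b hab => Subtype.ext (by have := a.2.1; have := b.2.1; simp only at hab; omega)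

/-- With `λ_n = n − ∑_{k>n} γ_k`, `γ_n ≥ 0` summable (so `∑ γ_n = −λ₀`), the
quantities `κ_n = (λ_n − λ_0)⁻¹ ∏_{p≠n, p≥1} (1 − γ_p/(λ_p − λ_n))` satisfy
`0 < κ_n ≤ e^{−λ₀}/n` for every `n ≥ 1`. Here `γ_p = λ_p − λ_{p-1} − 1`. -/
theorem stmt11 (lam : ℕ → ℝ)
    (hgap : ∀ p : ℕ, 0 ≤ lam (p + 1) - lam p - 1)
    (hsum : Summable fun p : ℕ => lam (p + 1) - lam p - 1)
    (hform : ∀ n : ℕ, lam n = n - ∑' i : ℕ, (lam (n + i + 1) - lam (n + i) - 1)) :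
    ∀ n : ℕ, 1 ≤ n →
      0 < (lam n - lam 0)⁻¹ *
          ∏' p : {p : ℕ // 1 ≤ p ∧ p ≠ n},
            (1 - (lam p.1 - lam (p.1 - 1) - 1) / (lam p.1 - lam n)) ∧
      (lam n - lam 0)⁻¹ *
          ∏' p : {p : ℕ // 1 ≤ p ∧ p ≠ n},
            (1 - (lam p.1 - lam (p.1 - 1) - 1) / (lam p.1 - lam n)) ≤
        Real.exp (-lam 0) / n := by
  intro n hn
  set γ : ℕ → ℝ := fun p => lam (p + 1) - lam p - 1
  have hshift : (fun p : {p : ℕ // 1 ≤ p ∧ p ≠ n} => lam p.1 - lam (p.1 - 1) - 1) =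
      γ ∘ fun p => p.1 - 1 := by
    funext ⟨p, hp, _⟩
    simp only [γ, Function.comp_apply, Nat.sub_add_cancel hp]
  obtain ⟨hprod_pos, hprod_le⟩ :=
    tprod_pos_and_le_exp_tsum (hshift ▸ hsum.comp_injective (pred_injective_subtype n))
      fun p => one_sub_gap_div_mem_Icc_exp hgap p.2.1 p.2.2
  have htsum_le : ∑' p : {p : ℕ // 1 ≤ p ∧ p ≠ n}, (lam p.1 - lam (p.1 - 1) - 1) ≤ -lam 0 := by
    have h0 := hform 0
    simp only [Nat.cast_zero, zero_add] at h0
    rw [hshift]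
    linarith [tsum_comp_le_tsum_of_inj hsum hgap (pred_injective_subtype n)]
  have hn_pos : (0 : ℝ) < n := by exact_mod_cast hn
  have hn_le : (n : ℝ) ≤ lam n - lam 0 := by
    simpa using natCast_sub_le_sub_of_gap_nonneg hgap n.zero_le
  refine ⟨mul_pos (inv_pos.2 (hn_pos.trans_le hn_le)) hprod_pos, ?_⟩
  calc (lam n - lam 0)⁻¹ * ∏' p : {p : ℕ // 1 ≤ p ∧ p ≠ n},
          (1 - (lam p.1 - lam (p.1 - 1) - 1) / (lam p.1 - lam n))
      ≤ (n : ℝ)⁻¹ * exp (-lam 0) := by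
        gcongr
        exact hprod_le.trans (exp_le_exp.2 htsum_le)
    _ = exp (-lam 0) / n := by rw [div_eq_inv_mul]
end
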